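/- Let B = (O, Ω, R, Ω∖T, T) be a bud generating system whose set of initial colors is I = Ω∖T. Then the collection O_{Ω,B} with O_{Ω,B}(n) = { x = (c, T, c̄) ∈ B_Ω(O)(n) : 1_c →_B x, c ∈ Ω∖T, c̄ ∈ (Ω∖T)^n } contains the colored units and is closed under the colored insertion operations of the bud operad B_Ω(O); hence O_{Ω,B} is a colored operad with color set Ω∖T. -/

import Mathlib

/-- An operad in the category of sets, presented via insertion operations `∘ᵢ`,
with a unit and the standard associativity/commutation axioms. -/
structure Operad where
  Ops : Type
  arity : Ops → ℕ
  unit : Ops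
  arity_unit : arity unit = 1
  ins : Ops → ℕ → Ops → Ops
  arity_ins : ∀ x i y, i < arity x → arity (ins x i y) = arity x + arity y - 1
  unit_ins : ∀ x, ins unit 0 x = x
  ins_unit : ∀ x i, i < arity x → ins x i unit = x
  ins_assoc : ∀ x y z i j, j ≤ i → i < j + arity y →
    ins (ins x j y) i z = ins x j (ins y (i - j) z)
  ins_comm : ∀ x y z i j, i < j → j < arity x →
    ins (ins x j y) i z = ins (ins x i z) (j + arity z - 1) y

/-- An element `(c, T, c̄)` of the bud operad `B_Ω(O)`: an operation `T` of `O`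
together with an output color `c` and a list `c̄` of input colors. -/
structure BudElem (O : Operad) (Ω : Type) where
  out : Ω
  op : O.Ops
  ins : List Ω
  len_eq : ins.length = O.arity op

/-- The colored unit `1_c = (c, 1, c)` of the bud operad. -/
def budUnit (O : Operad) (Ω : Type) (c : Ω) : BudElem O Ω :=
  ⟨c, O.unit, [c], by simp [O.arity_unit]⟩

/-- Colored insertion in the bud operad: `(c,T,c̄) ∘ᵢ (c',T',c̄')` is defined
exactly when `c̄ᵢ = c'`. -/
def budInsert {O : Operad} {Ω : Type} [DecidableEq Ω] (x : BudElem O Ω) (i : ℕ)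
    (r : BudElem O Ω) : Option (BudElem O Ω) :=
  if h : i < O.arity x.op ∧ x.ins[i]? = some r.out then
    some { out := x.out
           op := O.ins x.op i r.op
           ins := x.ins.take i ++ r.ins ++ x.ins.drop (i + 1)
           len_eq := by
             have e1 := x.len_eq
             have e2 := r.len_eq
             have e3 := O.arity_ins x.op i r.op h.1
             simp only [List.length_append, List.length_take, List.length_drop, e3]
             omega }
  else none

/-- Derivability `y →_B x` in a bud generating system with rule set `R`:
`x` is obtained from `y` by a finite sequence of insertions of rules of `R`. -/
inductive BudDerives {O : Operad} {Ω : Type} [DecidableEq Ω] (R : Set (BudElem O Ω)) :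
    BudElem O Ω → BudElem O Ω → Prop where
  | refl (x : BudElem O Ω) : BudDerives R x x
  | step {x y z : BudElem O Ω} (i : ℕ) (r : BudElem O Ω) :
      BudDerives R x y → r ∈ R → budInsert y i r = some z → BudDerives R x z

/-- The colored operad `O_{Ω,B}` determined by a bud generating system with
initial colors `I = Ω ∖ T`: elements derivable from a colored unit, with output
and input colors all nonterminal. -/
def OpsB {O : Operad} {Ω : Type} [DecidableEq Ω] (R : Set (BudElem O Ω)) (Term : Set Ω) :
    Set (BudElem O Ω) :=
  { x | BudDerives R (budUnit O Ω x.out) x ∧ x.out ∉ Term ∧ ∀ c ∈ x.ins, c ∉ Term }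

/-- The language `L(B)`: elements derivable from a colored unit `1_c`, `c ∈ I = Ω ∖ T`,
with all input colors terminal. -/
def BudLang {O : Operad} {Ω : Type} [DecidableEq Ω] (R : Set (BudElem O Ω)) (Term : Set Ω) :
    Set (BudElem O Ω) :=
  { x | BudDerives R (budUnit O Ω x.out) x ∧ x.out ∉ Term ∧ ∀ c ∈ x.ins, c ∈ Term }

/-- Full operadic composition `γ(x; a₁, …, aₙ)` in the bud operad, performed as the
sequence of insertions `(⋯(x ∘ₙ aₙ) ∘_{n-1} a_{n-1} ⋯ ) ∘₁ a₁`. -/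
def budComp {O : Operad} {Ω : Type} [DecidableEq Ω] (x : BudElem O Ω)
    (as : List (BudElem O Ω)) : Option (BudElem O Ω) :=
  (as.zipIdx.map Prod.swap).reverse.foldlM (fun acc p => budInsert acc p.1 p.2) x

/-- The projection `℘_in(c,T,c̄) = (T,c̄)` forgetting the output color. -/
def pIn {O : Operad} {Ω : Type} (x : BudElem O Ω) : O.Ops × List Ω := (x.op, x.ins)

/-- Application of an (uncolored) operation `S` of `O` to a list of pairs
`(Tⱼ, c̄ⱼ)`: operadic composition of the operations together with concatenation
of the color lists. -/
def opComp (O : Operad) {Ω : Type} (S : O.Ops) (as : List (O.Ops × List Ω)) :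
    O.Ops × List Ω :=
  (((as.map Prod.fst).zipIdx.map Prod.swap).reverse.foldl (fun acc p => O.ins acc p.1 p.2) S,
   (as.map Prod.snd).flatten)

/-! The only nontrivial point is closure under insertion. If `1_{c'} →_B y`, replaying that
derivation inside the `i`-th input of `x` gives `x ∘ᵢ 1_{c'} = x →_B x ∘ᵢ y`, each replayed step
being an insertion of the same rule thanks to the associativity of `∘` in `O`. Prefixing a
derivation `1_c →_B x` yields `1_c →_B x ∘ᵢ y`, and the colors of `x ∘ᵢ y` are colors of `x`
or of `y`. -/

namespace BudElem

variable {O : Operad} {Ω : Type}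

theorem ext_of {x y : BudElem O Ω} (h_out : x.out = y.out) (h_op : x.op = y.op)
    (h_ins : x.ins = y.ins) : x = y := by
  cases x; cases y; simp_all

end BudElem

section BudInsert

variable {O : Operad} {Ω : Type} [DecidableEq Ω]

theorem budInsert_isSome_iff {x r : BudElem O Ω} {i : ℕ} :
    (budInsert x i r).isSome ↔ i < O.arity x.op ∧ x.ins[i]? = some r.out := by
  unfold budInsert
  split <;> simp_all

theorem budInsert_eq_some {x r z : BudElem O Ω} {i : ℕ} (h : budInsert x i r = some z) :
    z.out = x.out ∧ z.op = O.ins x.op i r.op ∧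
      z.ins = x.ins.take i ++ r.ins ++ x.ins.drop (i + 1) := by
  unfold budInsert at h
  split at h
  · cases h; exact ⟨rfl, rfl, rfl⟩
  · cases h

theorem mem_ins_of_budInsert {x y z : BudElem O Ω} {i : ℕ} {c : Ω}
    (hz : budInsert x i y = some z) (hc : c ∈ z.ins) :
    c ∈ x.ins ∨ c ∈ y.ins := by
  rw [(budInsert_eq_some hz).2.2] at hc
  simp only [List.mem_append] at hc
  rcases hc with (hc | hc) | hc
  · exact .inl (List.take_subset _ _ hc)
  · exact .inr hc
  · exact .inl (List.drop_subset _ _ hc)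

theorem budInsert_unit {x z : BudElem O Ω} {i : ℕ} {c : Ω}
    (h : budInsert x i (budUnit O Ω c) = some z) : z = x := by
  obtain ⟨hi, hc⟩ := budInsert_isSome_iff.mp (Option.isSome_of_eq_some h)
  obtain ⟨h_out, h_op, h_ins⟩ := budInsert_eq_some h
  refine BudElem.ext_of h_out (h_op.trans (O.ins_unit x.op i hi)) ?_
  rw [h_ins, List.append_assoc]
  obtain ⟨hil, rfl⟩ := List.getElem?_eq_some_iff.mp hc
  simp [budUnit, ← List.drop_eq_getElem_cons hil]

theorem budInsert_assoc {x y r w y' z : BudElem O Ω} {i j : ℕ}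
    (hw : budInsert x i y = some w) (hy' : budInsert y j r = some y')
    (hz : budInsert x i y' = some z) : budInsert w (i + j) r = some z := by
  obtain ⟨hix, -⟩ := budInsert_isSome_iff.mp (Option.isSome_of_eq_some hw)
  obtain ⟨hjy, hcy⟩ := budInsert_isSome_iff.mp (Option.isSome_of_eq_some hy')
  obtain ⟨hw_out, hw_op, hw_ins⟩ := budInsert_eq_some hw
  obtain ⟨-, hy'_op, hy'_ins⟩ := budInsert_eq_some hy'
  obtain ⟨hz_out, hz_op, hz_ins⟩ := budInsert_eq_some hz
  have hlx := x.len_eq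
  have hly := y.len_eq
  have hcw : w.ins[i + j]? = some r.out := by
    rw [hw_ins, List.append_assoc, List.getElem?_append_right (by simp),
      List.length_take_of_le (by omega), Nat.add_sub_cancel_left,
      List.getElem?_append_left (by omega)]
    exact hcy
  obtain ⟨z', hz'⟩ := Option.isSome_iff_exists.mp <| budInsert_isSome_iff.mpr
    ⟨by rw [hw_op, O.arity_ins _ _ _ hix]; omega, hcw⟩
  obtain ⟨hz'_out, hz'_op, hz'_ins⟩ := budInsert_eq_some hz'
  rw [hz']
  congr 1
  refine BudElem.ext_of (by rw [hz'_out, hz_out, hw_out]) ?_ ?_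
  · rw [hz'_op, hz_op, hw_op, hy'_op, O.ins_assoc _ _ _ _ _ le_self_add (by omega),
      Nat.add_sub_cancel_left]
  · rw [hz'_ins, hz_ins, hw_ins, hy'_ins]
    have hti : (x.ins.take i).length = i := List.length_take_of_le (by omega)
    simp [List.take_append, List.drop_append, hti, List.take_of_length_le,
      show j - y.ins.length = 0 by omega, show i + j + 1 - i = j + 1 by omega,
      show j + 1 - y.ins.length = 0 by omega, show i ≤ i + j + 1 by omega]

end BudInsert

section BudDerives

variable {O : Operad} {Ω : Type} [DecidableEq Ω] {R : Set (BudElem O Ω)}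

theorem BudDerives.trans {a b c : BudElem O Ω} (hab : BudDerives R a b)
    (hbc : BudDerives R b c) : BudDerives R a c := by
  induction hbc with
  | refl => exact hab
  | step i r _ hr hins ih => exact .step i r ih hr hins

theorem BudDerives.budInsert_right {x u y w z : BudElem O Ω} {i : ℕ} (h : BudDerives R u y)
    (hw : budInsert x i u = some w) (hz : budInsert x i y = some z) : BudDerives R w z := by
  induction h generalizing z with
  | refl => rw [hw] at hz; cases hz; exact .refl w
  | @step y₁ y₂ j r _ hr hy₂ ih =>
    obtain ⟨hi, hc⟩ := budInsert_isSome_iff.mp (Option.isSome_of_eq_some hz)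
    obtain ⟨w₁, hw₁⟩ := Option.isSome_iff_exists.mp <|
      budInsert_isSome_iff.mpr ⟨hi, by rwa [← (budInsert_eq_some hy₂).1]⟩
    exact .step (i + j) r (ih hw₁) hr (budInsert_assoc hw₁ hy₂ hz)

theorem BudDerives.of_budInsert {x y z : BudElem O Ω} {i : ℕ}
    (hy : BudDerives R (budUnit O Ω y.out) y) (hz : budInsert x i y = some z) :
    BudDerives R x z := by
  obtain ⟨hi, hc⟩ := budInsert_isSome_iff.mp (Option.isSome_of_eq_some hz)
  obtain ⟨x', hx'⟩ := Option.isSome_iff_exists.mp <|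
    (budInsert_isSome_iff (r := budUnit O Ω y.out)).mpr ⟨hi, hc⟩
  obtain rfl := budInsert_unit hx'
  exact hy.budInsert_right hx' hz

end BudDerives

theorem statement0_general (O : Operad) (Ω : Type) [DecidableEq Ω]
    (R : Set (BudElem O Ω)) (Term : Set Ω) :
    (∀ c ∉ Term, budUnit O Ω c ∈ OpsB R Term) ∧
    (∀ x ∈ OpsB R Term, ∀ y ∈ OpsB R Term, ∀ (i : ℕ) (z : BudElem O Ω),
        budInsert x i y = some z → z ∈ OpsB R Term) := by
  refine ⟨fun c hc => ⟨.refl _, hc, fun c' hc' => ?_⟩, ?_⟩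
  · rwa [List.mem_singleton.mp hc']
  rintro x ⟨hx, hx_out, hx_ins⟩ y ⟨hy, -, hy_ins⟩ i z hz
  have hz_out : z.out = x.out := (budInsert_eq_some hz).1
  refine ⟨hz_out ▸ hx.trans (hy.of_budInsert hz), hz_out ▸ hx_out, fun c hc => ?_⟩
  rcases mem_ins_of_budInsert hz hc with hc | hc
  · exact hx_ins c hc
  · exact hy_ins c hc

/-- For a bud generating system `B = (O, Ω, R, Ω∖T, T)` with initial
colors `I = Ω∖T`, the collection `O_{Ω,B}` of all `x = (c,T,c̄) ∈ B_Ω(O)` with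
`1_c →_B x`, `c ∈ Ω∖T`, `c̄ ∈ (Ω∖T)ⁿ` contains the colored units and is closed
under the colored insertion operations of the bud operad `B_Ω(O)`; hence it is a
colored operad with color set `Ω∖T`. -/
theorem statement0 (O : Operad) (Ω : Type) [Finite Ω] [DecidableEq Ω]
    (R : Set (BudElem O Ω)) (hR : R.Finite) (Term : Set Ω) :
    (∀ c ∉ Term, budUnit O Ω c ∈ OpsB R Term) ∧
    (∀ x ∈ OpsB R Term, ∀ y ∈ OpsB R Term, ∀ (i : ℕ) (z : BudElem O Ω),
        budInsert x i y = some z → z ∈ OpsB R Term) :=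
  statement0_general O Ω R Term
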